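/- Let G together with a labeling ℓ be a simple permutation graph of a permutation π of {1,…,n}. Then π is separable if and only if G is a cograph. -/

import Mathlib

/-- The edge relation `E` on `V` together with the labeling `ℓ : V ≃ Fin n`
is the simple permutation graph of the permutation `π` of `{1,…,n}`:
`{u,v} ∈ E ⇔ ℓ(u) > ℓ(v) and π⁻¹(ℓ(u)) < π⁻¹(ℓ(v))` (stated symmetrically in `u,v`). -/
def IsPermGraph {V : Type*} {n : ℕ} (E : V → V → Prop) (ℓ : V ≃ Fin n)
    (π : Equiv.Perm (Fin n)) : Prop :=
  ∀ u v : V, E u v ↔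
    ((ℓ v < ℓ u ∧ π⁻¹ (ℓ u) < π⁻¹ (ℓ v)) ∨ (ℓ u < ℓ v ∧ π⁻¹ (ℓ v) < π⁻¹ (ℓ u)))

/-- The permutation `π` is separable: it avoids the patterns 2413 and 3142. -/
def IsSeparablePerm {n : ℕ} (π : Equiv.Perm (Fin n)) : Prop :=
  (¬ ∃ i₁ i₂ i₃ i₄ : Fin n, i₁ < i₂ ∧ i₂ < i₃ ∧ i₃ < i₄ ∧
      π i₃ < π i₁ ∧ π i₁ < π i₄ ∧ π i₄ < π i₂) ∧
  (¬ ∃ i₁ i₂ i₃ i₄ : Fin n, i₁ < i₂ ∧ i₂ < i₃ ∧ i₃ < i₄ ∧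
      π i₂ < π i₄ ∧ π i₄ < π i₁ ∧ π i₁ < π i₃)

/-- The graph with edge relation `E` contains an induced path on four vertices. -/
def HasInducedP4 {V : Type*} (E : V → V → Prop) : Prop :=
  ∃ a b c d : V, a ≠ b ∧ a ≠ c ∧ a ≠ d ∧ b ≠ c ∧ b ≠ d ∧ c ≠ d ∧
    E a b ∧ E b c ∧ E c d ∧ ¬ E a c ∧ ¬ E a d ∧ ¬ E b d

/-! Relabelling each vertex `v` by its position `π⁻¹ (ℓ v)` identifies `G` with the inversion
graph of `π`. There, an occurrence of 2413 or 3142 at positions `i₁ < i₂ < i₃ < i₄` is the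
induced path `i₁ i₃ i₂ i₄` resp. `i₂ i₁ i₄ i₃`. Conversely, orient an induced path `a b c d` so
that `b < c`; comparing `a` with `c` then forces the four positions into one of the two
patterns. -/

open Function

section InversionGraph

variable {α β : Type*} [LinearOrder α] [LinearOrder β] {f : α → β} {i j : α}

def IsInversion (f : α → β) (i j : α) : Prop :=
  (j < i ∧ f i < f j) ∨ (i < j ∧ f j < f i)

def Contains2413 (f : α → β) : Prop :=
  ∃ i₁ i₂ i₃ i₄, i₁ < i₂ ∧ i₂ < i₃ ∧ i₃ < i₄ ∧ f i₃ < f i₁ ∧ f i₁ < f i₄ ∧ f i₄ < f i₂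

def Contains3142 (f : α → β) : Prop :=
  ∃ i₁ i₂ i₃ i₄, i₁ < i₂ ∧ i₂ < i₃ ∧ i₃ < i₄ ∧ f i₂ < f i₄ ∧ f i₄ < f i₁ ∧ f i₁ < f i₃

theorem IsInversion.symm (h : IsInversion f i j) : IsInversion f j i :=
  Or.symm h

theorem isInversion_of_lt (hij : i < j) (hf : f j < f i) : IsInversion f i j :=
  Or.inr ⟨hij, hf⟩

theorem not_isInversion_of_lt (hij : i < j) (hf : f i < f j) : ¬IsInversion f i j := by
  rintro (⟨h, -⟩ | ⟨-, h⟩) <;> order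

theorem not_isInversion_iff (hf : Injective f) (hij : i ≠ j) :
    ¬IsInversion f i j ↔ (i < j ∧ f i < f j) ∨ (j < i ∧ f j < f i) := by
  rcases hij.lt_or_gt with h | h <;> rcases (hf.ne hij).lt_or_gt with h' | h' <;>
    simp [IsInversion, h, h', h.not_gt, h'.not_gt]

theorem Contains2413.hasInducedP4 (h : Contains2413 f) : HasInducedP4 (IsInversion f) := by
  obtain ⟨i₁, i₂, i₃, i₄, h₁₂, h₂₃, h₃₄, h₃₁, h₁₄, h₄₂⟩ := h
  exact ⟨i₁, i₃, i₂, i₄, by order, by order, by order, by order, by order, by order,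
    isInversion_of_lt (by order) h₃₁, (isInversion_of_lt h₂₃ (by order)).symm,
    isInversion_of_lt (by order) h₄₂, not_isInversion_of_lt (by order) (by order),
    not_isInversion_of_lt (by order) h₁₄, not_isInversion_of_lt h₃₄ (by order)⟩

theorem Contains3142.hasInducedP4 (h : Contains3142 f) : HasInducedP4 (IsInversion f) := by
  obtain ⟨i₁, i₂, i₃, i₄, h₁₂, h₂₃, h₃₄, h₂₄, h₄₁, h₁₃⟩ := h
  exact ⟨i₂, i₁, i₄, i₃, by order, by order, by order, by order, by order, by order,
    (isInversion_of_lt h₁₂ (by order)).symm, isInversion_of_lt (by order) h₄₁,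
    (isInversion_of_lt h₃₄ (by order)).symm, not_isInversion_of_lt (by order) h₂₄,
    not_isInversion_of_lt h₂₃ (by order), not_isInversion_of_lt (by order) h₁₃⟩

theorem contains2413_or_contains3142_of_inducedP4 (hf : Injective f) {a b c d : α}
    (hne_ac : a ≠ c) (hne_ad : a ≠ d) (hne_bd : b ≠ d) (hbc : b < c)
    (eab : IsInversion f a b) (ebc : IsInversion f b c) (ecd : IsInversion f c d)
    (nac : ¬IsInversion f a c) (nad : ¬IsInversion f a d) (nbd : ¬IsInversion f b d) :
    Contains2413 f ∨ Contains3142 f := by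
  have hfcb : f c < f b := by rcases ebc with ⟨h, -⟩ | ⟨-, h⟩ <;> order
  rw [not_isInversion_iff hf hne_ac] at nac
  rw [not_isInversion_iff hf hne_ad] at nad
  rw [not_isInversion_iff hf hne_bd] at nbd
  rcases hne_ac.lt_or_gt with hac | hca
  · have hfac : f a < f c := by rcases nac with ⟨-, h⟩ | ⟨h, -⟩ <;> order
    have hba : b < a := by rcases eab with ⟨h, -⟩ | ⟨-, h⟩ <;> order
    have hdc : d < c := by
      rcases ecd with ⟨h, -⟩ | ⟨_, _⟩
      · exact h
      · rcases nbd with ⟨-, h⟩ | ⟨h, -⟩ <;> order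
    have hfcd : f c < f d := by rcases ecd with ⟨-, h⟩ | ⟨h, -⟩ <;> order
    have had : a < d := by rcases nad with ⟨h, -⟩ | ⟨-, h⟩ <;> order
    have hfbd : f b < f d := by rcases nbd with ⟨-, h⟩ | ⟨h, -⟩ <;> order
    exact Or.inr ⟨b, a, d, c, hba, had, hdc, hfac, hfcb, hfbd⟩
  · have hfca : f c < f a := by rcases nac with ⟨h, -⟩ | ⟨-, h⟩ <;> order
    have hfab : f a < f b := by rcases eab with ⟨-, h⟩ | ⟨h, -⟩ <;> order
    have hdb : d < b := by
      rcases nbd with ⟨_, _⟩ | ⟨h, -⟩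
      · rcases nad with ⟨_, _⟩ | ⟨_, _⟩ <;> rcases ecd with ⟨_, _⟩ | ⟨_, _⟩ <;> order
      · exact h
    have hfda : f d < f a := by rcases nad with ⟨h, -⟩ | ⟨-, h⟩ <;> order
    have hfcd : f c < f d := by rcases ecd with ⟨-, h⟩ | ⟨h, -⟩ <;> order
    exact Or.inl ⟨d, b, c, a, hdb, hbc, hca, hfcd, hfda, hfab⟩

theorem hasInducedP4_isInversion_iff (hf : Injective f) :
    HasInducedP4 (IsInversion f) ↔ Contains2413 f ∨ Contains3142 f := by
  refine ⟨?_, fun h => h.elim Contains2413.hasInducedP4 Contains3142.hasInducedP4⟩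
  rintro ⟨a, b, c, d, -, hac, had, hbc, hbd, -, eab, ebc, ecd, nac, nad, nbd⟩
  rcases hbc.lt_or_gt with hbc | hcb
  · exact contains2413_or_contains3142_of_inducedP4 hf hac had hbd hbc eab ebc ecd nac nad nbd
  · exact contains2413_or_contains3142_of_inducedP4 hf hbd.symm had.symm hac.symm hcb
      ecd.symm ebc.symm eab.symm (mt IsInversion.symm nbd) (mt IsInversion.symm nad)
      (mt IsInversion.symm nac)

end InversionGraph

theorem HasInducedP4.map {V W : Type*} {E : V → V → Prop} {F : W → W → Prop} (e : V ↪ W)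
    (he : ∀ u v, E u v ↔ F (e u) (e v)) (h : HasInducedP4 E) : HasInducedP4 F := by
  obtain ⟨a, b, c, d, hab, hac, had, hbc, hbd, hcd, eab, ebc, ecd, nac, nad, nbd⟩ := h
  rw [he] at eab ebc ecd nac nad nbd
  exact ⟨e a, e b, e c, e d, e.injective.ne hab, e.injective.ne hac, e.injective.ne had,
    e.injective.ne hbc, e.injective.ne hbd, e.injective.ne hcd, eab, ebc, ecd, nac, nad, nbd⟩

theorem hasInducedP4_congr {V W : Type*} {E : V → V → Prop} {F : W → W → Prop} (e : V ≃ W)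
    (he : ∀ u v, E u v ↔ F (e u) (e v)) : HasInducedP4 E ↔ HasInducedP4 F :=
  ⟨HasInducedP4.map e.toEmbedding he,
    HasInducedP4.map e.symm.toEmbedding fun x y => by simp [he]⟩

theorem IsPermGraph.adj_iff_isInversion {V : Type*} {n : ℕ} {E : V → V → Prop} {ℓ : V ≃ Fin n}
    {π : Equiv.Perm (Fin n)} (h : IsPermGraph E ℓ π) (u v : V) :
    E u v ↔ IsInversion π ((ℓ.trans π.symm) u) ((ℓ.trans π.symm) v) := by
  simp [h u v, IsInversion, and_comm, or_comm]

/-- If `(G,ℓ)` is a simple permutation graph of `π`, then `π` is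
separable if and only if `G` is a cograph (contains no induced path on four
vertices). -/
theorem stmt19 {V : Type*} {n : ℕ} (E : V → V → Prop) (ℓ : V ≃ Fin n)
    (π : Equiv.Perm (Fin n)) (h : IsPermGraph E ℓ π) :
    IsSeparablePerm π ↔ ¬ HasInducedP4 E := by
  rw [hasInducedP4_congr (ℓ.trans π.symm) h.adj_iff_isInversion,
    hasInducedP4_isInversion_iff π.injective, not_or]
  exact Iff.rfl
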